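/- arXiv:2207.00999 — 3 statements merged into one kernel-verified Lean document; each statement's English description precedes it below -/
import Mathlib

section
/- For a closed convex set S ⊆ ℝⁿ and points x, y ∈ S, the projection of a vector v at the point x over S, defined as Π_S[x,v] = lim_{ξ→0⁺} (P_S(x+ξv) − x)/ξ where P_S is the Euclidean projection onto S, satisfies (x − y)ᵀ Π_S[x,v] ≤ (x − y)ᵀ v for all v ∈ ℝⁿ. -/
/-!
With `z = x + ξ • v` and `p = P z`, split `x - y = (x - z) + (z - p) + (p - y)`; the
variational inequality `⟪z - p, y - p⟫ ≤ 0` then gives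
`⟪x - y, p - z⟫ ≤ ‖x - z‖ * ‖p - z‖ - ‖p - z‖ ^ 2 ≤ ξ ^ 2 * ‖v‖ ^ 2 / 4`.
Dividing by `ξ`, the difference quotient `⟪x - y, ξ⁻¹ • (p - x)⟫` exceeds `⟪x - y, v⟫`
by at most `ξ * ‖v‖ ^ 2 / 4`, and the claim follows as `ξ → 0⁺`.
-/

open Filter Topology
open scoped InnerProductSpace

section NearestPoint

variable {F : Type*} [NormedAddCommGroup F] [InnerProductSpace ℝ F] {K : Set F}

theorem real_inner_sub_le_zero_of_isNearest (hK : Convex ℝ K) {z p : F} (hp : p ∈ K)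
    (hmin : ∀ w ∈ K, ‖z - p‖ ≤ ‖z - w‖) {w : F} (hw : w ∈ K) :
    ⟪z - p, w - p⟫_ℝ ≤ 0 := by
  have : Nonempty K := ⟨⟨p, hp⟩⟩
  have hinf : ‖z - p‖ = ⨅ w : K, ‖z - w‖ :=
    le_antisymm (le_ciInf fun w => hmin w w.2)
      (ciInf_le (f := fun w : K => ‖z - w‖)
        ⟨0, Set.forall_mem_range.2 fun _ => norm_nonneg _⟩ ⟨p, hp⟩)
  exact (norm_eq_iInf_iff_real_inner_le_zero hK hp).1 hinf w hw

theorem real_inner_sub_nearest_le (hK : Convex ℝ K) {z p : F} (hp : p ∈ K)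
    (hmin : ∀ w ∈ K, ‖z - p‖ ≤ ‖z - w‖) {y : F} (hy : y ∈ K) (x : F) :
    ⟪x - y, p - z⟫_ℝ ≤ ‖x - z‖ ^ 2 / 4 := by
  have hvar := real_inner_sub_le_zero_of_isNearest hK hp hmin hy
  have hdecomp :
      ⟪x - y, p - z⟫_ℝ = ⟪x - z, p - z⟫_ℝ - ‖p - z‖ ^ 2 + ⟪z - p, y - p⟫_ℝ := by
    have hswap : ⟪z - p, y - p⟫_ℝ = ⟪p - y, p - z⟫_ℝ := by
      rw [real_inner_comm, ← neg_sub p y, ← neg_sub p z, inner_neg_neg]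
    rw [hswap, ← real_inner_self_eq_norm_sq, ← inner_sub_left, ← inner_add_left]
    congr 1
    abel
  calc ⟪x - y, p - z⟫_ℝ ≤ ‖x - z‖ * ‖p - z‖ - ‖p - z‖ ^ 2 := by
        linarith [real_inner_le_norm (x - z) (p - z)]
    _ ≤ ‖x - z‖ ^ 2 / 4 := by nlinarith [sq_nonneg (‖x - z‖ - 2 * ‖p - z‖)]

theorem real_inner_smul_nearest_sub_le (hK : Convex ℝ K) {P : F → F}
    (hP : ∀ z, P z ∈ K ∧ ∀ w ∈ K, ‖z - P z‖ ≤ ‖z - w‖) {y : F} (hy : y ∈ K)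
    (x v : F) {ξ : ℝ} (hξ : 0 < ξ) :
    ⟪x - y, ξ⁻¹ • (P (x + ξ • v) - x)⟫_ℝ ≤ ⟪x - y, v⟫_ℝ + ξ * ‖v‖ ^ 2 / 4 := by
  set z := x + ξ • v
  have hquot : ξ⁻¹ • (P z - x) = v + ξ⁻¹ • (P z - z) := by
    rw [show P z - x = ξ • v + (P z - z) by simp only [z]; abel, smul_add,
      inv_smul_smul₀ hξ.ne']
  have hzx : ‖x - z‖ = ξ * ‖v‖ := by
    simp only [z, sub_add_cancel_left, norm_neg, norm_smul, Real.norm_of_nonneg hξ.le]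
  rw [hquot, inner_add_right, real_inner_smul_right]
  calc ⟪x - y, v⟫_ℝ + ξ⁻¹ * ⟪x - y, P z - z⟫_ℝ
      ≤ ⟪x - y, v⟫_ℝ + ξ⁻¹ * ((ξ * ‖v‖) ^ 2 / 4) := by
        rw [← hzx]
        gcongr
        exact real_inner_sub_nearest_le hK (hP z).1 (hP z).2 hy x
    _ = ⟪x - y, v⟫_ℝ + ξ * ‖v‖ ^ 2 / 4 := by field_simp

end NearestPoint

theorem stmt0_general {n : ℕ} (S : Set (EuclideanSpace ℝ (Fin n)))
    (hconv : Convex ℝ S)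
    (P : EuclideanSpace ℝ (Fin n) → EuclideanSpace ℝ (Fin n))
    (hP : ∀ z, P z ∈ S ∧ ∀ w ∈ S, ‖z - P z‖ ≤ ‖z - w‖)
    (x y : EuclideanSpace ℝ (Fin n)) (hy : y ∈ S)
    (v Pi : EuclideanSpace ℝ (Fin n))
    (hPi : Filter.Tendsto (fun ξ : ℝ => ξ⁻¹ • (P (x + ξ • v) - x))
      (nhdsWithin 0 (Set.Ioi 0)) (nhds Pi)) :
    (inner ℝ (x - y) Pi : ℝ) ≤ (inner ℝ (x - y) v : ℝ) := by
  have hrhs : Tendsto (fun ξ : ℝ => ⟪x - y, v⟫_ℝ + ξ * ‖v‖ ^ 2 / 4) (𝓝[>] 0)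
      (𝓝 ⟪x - y, v⟫_ℝ) :=
    (Continuous.tendsto' (by fun_prop) 0 _ (by simp)).mono_left nhdsWithin_le_nhds
  refine le_of_tendsto_of_tendsto (tendsto_const_nhds.inner hPi) hrhs ?_
  filter_upwards [self_mem_nhdsWithin] with ξ hξ
  exact real_inner_smul_nearest_sub_le hconv hP hy x v hξ

/-- Projection inequality (Lemma 1): for a nonempty closed convex set `S`,
points `x, y ∈ S`, the directional projection `Π_S[x,v]` (defined as the
limit of `(P_S(x+ξv)-x)/ξ` as `ξ → 0⁺`) satisfies
`⟪x-y, Π_S[x,v]⟫ ≤ ⟪x-y, v⟫`. -/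
theorem stmt0 {n : ℕ} (S : Set (EuclideanSpace ℝ (Fin n)))
    (hS : S.Nonempty) (hclosed : IsClosed S) (hconv : Convex ℝ S)
    (P : EuclideanSpace ℝ (Fin n) → EuclideanSpace ℝ (Fin n))
    (hP : ∀ z, P z ∈ S ∧ ∀ w ∈ S, ‖z - P z‖ ≤ ‖z - w‖)
    (x y : EuclideanSpace ℝ (Fin n)) (hx : x ∈ S) (hy : y ∈ S)
    (v Pi : EuclideanSpace ℝ (Fin n))
    (hPi : Filter.Tendsto (fun ξ : ℝ => ξ⁻¹ • (P (x + ξ • v) - x))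
      (nhdsWithin 0 (Set.Ioi 0)) (nhds Pi)) :
    (inner ℝ (x - y) Pi : ℝ) ≤ (inner ℝ (x - y) v : ℝ) :=
  stmt0_general S hconv P hP x y hy v Pi hPi
end

section
/- Let μ₁,…,μ_N, μ̂₁,…,μ̂_N ∈ ℝ^q with eᵢ := μ̂ᵢ − μᵢ, and let a_{ij} = a_{ji} ≥ 0 be symmetric weights. Then for any K_μ, ε > 0: −2εK_μ Σᵢ Σⱼ a_{ij} μᵢᵀ sgn(μ̂ᵢ − μ̂ⱼ) ≤ −εK_μ Σᵢ Σⱼ a_{ij} ‖μ̂ᵢ − μ̂ⱼ‖₁ + εK_μ√q Σᵢ Σⱼ a_{ij} ‖eᵢ − eⱼ‖, where sgn is applied componentwise (with sgn(0) = 0). -/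
private lemma l1_le_sqrt {q : ℕ} (y : Fin q → ℝ) :
    ∑ k, |y k| ≤ Real.sqrt q * Real.sqrt (∑ k, y k ^ 2) := by
  have h := Finset.sum_mul_sq_le_sq_mul_sq Finset.univ (fun _ : Fin q => (1:ℝ))
    (fun k => |y k|)
  simp only [one_mul, one_pow, Finset.sum_const, Finset.card_univ, Fintype.card_fin,
    nsmul_eq_mul, mul_one, sq_abs] at h
  have h0 : (0:ℝ) ≤ ∑ k, |y k| := Finset.sum_nonneg fun k _ => abs_nonneg _
  have h2 : (∑ k, |y k|) ^ 2 ≤ (q : ℝ) * ∑ k, y k ^ 2 := h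
  calc ∑ k, |y k| = Real.sqrt ((∑ k, |y k|) ^ 2) := (Real.sqrt_sq h0).symm
    _ ≤ Real.sqrt ((q : ℝ) * ∑ k, y k ^ 2) := Real.sqrt_le_sqrt h2
    _ = Real.sqrt q * Real.sqrt (∑ k, y k ^ 2) := Real.sqrt_mul (Nat.cast_nonneg q) _

private lemma mul_sign_self (x : ℝ) : x * Real.sign x = |x| := by
  rcases lt_trichotomy x 0 with h | h | h
  · rw [Real.sign_of_neg h, abs_of_neg h]; ring
  · simp [h]
  · rw [Real.sign_of_pos h, abs_of_pos h]; ring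

private lemma abs_sign_le_one (x : ℝ) : |Real.sign x| ≤ 1 := by
  unfold Real.sign; split_ifs <;> norm_num

/-- Inequality (vb3): the cross term with the sign function satisfies
`-2εK_μ ∑ᵢⱼ aᵢⱼ μᵢᵀ sgn(μ̂ᵢ-μ̂ⱼ) ≤ -εK_μ ∑ᵢⱼ aᵢⱼ‖μ̂ᵢ-μ̂ⱼ‖₁ + εK_μ√q ∑ᵢⱼ aᵢⱼ‖eᵢ-eⱼ‖`. -/
theorem stmt11 {N q : ℕ} (a : Fin N → Fin N → ℝ)
    (ha : ∀ i j, 0 ≤ a i j) (hsym : ∀ i j, a i j = a j i)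
    (μ μhat e : Fin N → Fin q → ℝ)
    (he : ∀ i k, e i k = μhat i k - μ i k)
    (Kμ ε : ℝ) (hKμ : 0 < Kμ) (hε : 0 < ε) :
    -2 * ε * Kμ * ∑ i, ∑ j, a i j * ∑ k, μ i k * Real.sign (μhat i k - μhat j k) ≤
      -ε * Kμ * ∑ i, ∑ j, a i j * ∑ k, |μhat i k - μhat j k| +
        ε * Kμ * Real.sqrt q *
          ∑ i, ∑ j, a i j * Real.sqrt (∑ k, (e i k - e j k) ^ 2) := by
  set S := ∑ i, ∑ j, a i j * ∑ k, μ i k * Real.sign (μhat i k - μhat j k) with hS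
  set A := ∑ i, ∑ j, a i j * ∑ k, |μhat i k - μhat j k| with hA
  set B := ∑ i, ∑ j, a i j * Real.sqrt (∑ k, (e i k - e j k) ^ 2) with hB
  -- symmetrization: 2S = ∑ᵢⱼ aᵢⱼ ∑ₖ (μᵢ-μⱼ)·sign
  have hswap : S = ∑ i, ∑ j, a i j * ∑ k, -(μ j k * Real.sign (μhat i k - μhat j k)) := by
    rw [hS, Finset.sum_comm]
    refine Finset.sum_congr rfl fun j _ => Finset.sum_congr rfl fun i _ => ?_
    rw [hsym]
    congr 1
    refine Finset.sum_congr rfl fun k _ => ?_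
    have : μhat j k - μhat i k = -(μhat i k - μhat j k) := by ring
    rw [this, Real.sign_neg]; ring
  have h2S : 2 * S = ∑ i, ∑ j, a i j *
      ∑ k, (μ i k - μ j k) * Real.sign (μhat i k - μhat j k) := by
    have : 2 * S = S + S := by ring
    rw [this]
    nth_rewrite 2 [hswap]
    rw [hS, ← Finset.sum_add_distrib]
    refine Finset.sum_congr rfl fun i _ => ?_
    rw [← Finset.sum_add_distrib]
    refine Finset.sum_congr rfl fun j _ => ?_
    rw [← mul_add, ← Finset.sum_add_distrib]
    congr 1
    refine Finset.sum_congr rfl fun k _ => ?_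
    ring
  -- pointwise bound
  have key : A - Real.sqrt q * B ≤ 2 * S := by
    rw [h2S, hA, hB, Finset.mul_sum, ← Finset.sum_sub_distrib]
    refine Finset.sum_le_sum fun i _ => ?_
    rw [Finset.mul_sum, ← Finset.sum_sub_distrib]
    refine Finset.sum_le_sum fun j _ => ?_
    have hdec : ∀ k, (μ i k - μ j k) * Real.sign (μhat i k - μhat j k)
        = |μhat i k - μhat j k| - (e i k - e j k) * Real.sign (μhat i k - μhat j k) := by
      intro k
      have hμ : μ i k - μ j k = (μhat i k - μhat j k) - (e i k - e j k) := by
        rw [he, he]; ring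
      rw [hμ, sub_mul, mul_sign_self]
    have hsum : ∑ k, (μ i k - μ j k) * Real.sign (μhat i k - μhat j k)
        = (∑ k, |μhat i k - μhat j k|)
          - ∑ k, (e i k - e j k) * Real.sign (μhat i k - μhat j k) := by
      rw [← Finset.sum_sub_distrib]
      exact Finset.sum_congr rfl fun k _ => hdec k
    have hbnd : ∑ k, (e i k - e j k) * Real.sign (μhat i k - μhat j k)
        ≤ Real.sqrt q * Real.sqrt (∑ k, (e i k - e j k) ^ 2) := by
      calc ∑ k, (e i k - e j k) * Real.sign (μhat i k - μhat j k)
          ≤ ∑ k, |e i k - e j k| := by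
            refine Finset.sum_le_sum fun k _ => ?_
            calc (e i k - e j k) * Real.sign (μhat i k - μhat j k)
                ≤ |(e i k - e j k) * Real.sign (μhat i k - μhat j k)| := le_abs_self _
              _ = |e i k - e j k| * |Real.sign (μhat i k - μhat j k)| := abs_mul _ _
              _ ≤ |e i k - e j k| * 1 :=
                  mul_le_mul_of_nonneg_left (abs_sign_le_one _) (abs_nonneg _)
              _ = |e i k - e j k| := mul_one _
        _ ≤ Real.sqrt q * Real.sqrt (∑ k, (e i k - e j k) ^ 2) :=
            l1_le_sqrt fun k => e i k - e j k
    rw [hsum, mul_sub]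
    have haij := ha i j
    nlinarith [mul_le_mul_of_nonneg_left hbnd haij]
  have hc : 0 < ε * Kμ := mul_pos hε hKμ
  nlinarith [mul_le_mul_of_nonneg_left key (le_of_lt hc)]
end

section
/- Suppose e: [t₀, ∞) → ℝ^q satisfies e(t₀) = 0 and ‖e(t)‖ ≤ δ(t − t₀) for all t ≥ t₀, where δ > 0. If the next triggering time is t₁ = inf{t > t₀ : ‖e(t)‖ ≥ c + βe^{−ιt}} with constants c ≥ 0, β > 0, ι > 0, then t₁ − t₀ ≥ βe^{−ιt₁}/δ > 0; in particular t₁ > t₀, so no two consecutive triggering times coincide (no Zeno behavior at finite time). -/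
/-- Zeno-exclusion argument (Theorem 5): if the error resets to zero at `t₀`,
grows at most linearly with rate `δ`, and the trigger threshold
`c + βe^{-ιt}` is reached at `t₁ ≥ t₀`, then `t₁ - t₀ ≥ βe^{-ιt₁}/δ > 0`. -/
theorem stmt16 {q : ℕ} (e : ℝ → Fin q → ℝ) (t₀ t₁ δ c β ι : ℝ)
    (hδ : 0 < δ) (hc : 0 ≤ c) (hβ : 0 < β) (hι : 0 < ι)
    (he0 : e t₀ = 0)
    (hgrow : ∀ t, t₀ ≤ t → Real.sqrt (∑ k, (e t k) ^ 2) ≤ δ * (t - t₀))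
    (ht : t₀ ≤ t₁)
    (htrig : c + β * Real.exp (-ι * t₁) ≤ Real.sqrt (∑ k, (e t₁ k) ^ 2)) :
    β * Real.exp (-ι * t₁) / δ ≤ t₁ - t₀ ∧ t₀ < t₁ := by
  have hE : 0 < β * Real.exp (-ι * t₁) := by positivity
  have h1 : β * Real.exp (-ι * t₁) ≤ δ * (t₁ - t₀) :=
    le_trans (by linarith [htrig.trans (hgrow t₁ ht)]) (le_refl _)
  constructor
  · rw [div_le_iff₀ hδ]; linarith [mul_comm δ (t₁ - t₀)]
  · nlinarith
end
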